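/- Assume the flow setup below and let t* = min(1/(2‖D^{(1)}V‖_{∞,M}), t₀) (with 1/0 := ∞). Then for all t ∈ (0, t*], all x ∈ K₁, all h ∈ ℝⁿ with ‖h‖ < 1, and all i ∈ {1,…,n}, one has ‖D_i Y^{x+h}(t) − D_i Y^{x}(t)‖ ≤ 8·‖D^{(2)}V‖_{∞,M}·t*·‖h‖, where D_iY^x(t) := lim_{u→0} (Y^{x+u e_i}(t) − Y^x(t))/u. -/

import Mathlib

open MeasureTheory Filter Topology Set

/-- The partial derivative of `g : ℝⁿ → ℝ` in the `i`-th coordinate direction. -/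
noncomputable def pderiv' {n : ℕ} (i : Fin n) (g : (Fin n → ℝ) → ℝ) : (Fin n → ℝ) → ℝ :=
  fun x => fderiv ℝ g x (Pi.single i 1)

/-- The iterated partial derivative `D^β g` associated with a multi-index `β : Fin n → ℕ`. -/
noncomputable def mderiv' {n : ℕ} (β : Fin n → ℕ) (g : (Fin n → ℝ) → ℝ) : (Fin n → ℝ) → ℝ :=
  (List.finRange n).foldr (fun i h => (pderiv' i)^[β i] h) g

/-- `‖D^{(j)}V‖_{∞,U} = Σ_{|β|=j} Σ_{k=1}^{n} sup_{x∈U} |D^β V_k(x)|`. -/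
noncomputable def DjNorm {n : ℕ} (j : ℕ) (V : (Fin n → ℝ) → Fin n → ℝ)
    (U : Set (Fin n → ℝ)) : ℝ :=
  ∑ β ∈ Finset.univ.filter (fun β : Fin n → Fin (j + 1) => ∑ i, (β i : ℕ) = j),
    ∑ k : Fin n,
      sSup ((fun x => |mderiv' (fun i => (β i : ℕ)) (fun z => V z k) x|) '' U)

/-- `t* = min(1/(2‖D^{(1)}V‖_{∞,M}), t₀)`, with the convention `1/0 = ∞`. -/
noncomputable def tstar {n : ℕ} (V : (Fin n → ℝ) → Fin n → ℝ) (M : Set (Fin n → ℝ))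
    (t₀ : ℝ) : ℝ :=
  if DjNorm 1 V M = 0 then t₀ else min (1 / (2 * DjNorm 1 V M)) t₀

/-!
Write `L = ‖D^{(1)}V‖_{∞,M}` and `B = ‖D^{(2)}V‖_{∞,M}`. In the sup norm `‖DV‖ ≤ L` on `M`, and by
the mean value theorem on the convex set `M` the derivative `DV` is `2B`-Lipschitz there (the factor
`2` because `∂ᵢ∂ⱼ` and `∂ⱼ∂ᵢ` belong to the same multi-index in `B`).

If `φ r = a + ∫₀ʳ g` with `‖g s‖ ≤ f s + L ‖φ s‖`, evaluating at a point of `[0, t]` where `‖φ‖` is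
maximal gives `‖φ t‖ (1 - L t) ≤ ‖a‖ + ∫₀ᵗ f`. For two trajectories this yields
`‖Y^{z'}(t) - Y^z(t)‖ (1 - L t) ≤ ‖z' - z‖`. The second difference
`W = (Y^{x+h+u eᵢ} - Y^{x+h}) - (Y^{x+u eᵢ} - Y^x)` satisfies `W(r) = ∫₀ʳ G`, and the mean
value theorem along the segments between the four trajectories, together with the first estimate,
bounds `‖G s‖` by `2B ‖h‖ |u| (1 - L s)⁻² + L ‖W s‖`. As `∫₀ᵗ (1 - L s)⁻² ds = t / (1 - L t)`, this gives
`‖W t‖ (1 - L t)² ≤ 2B ‖h‖ |u| t`. Since `L t ≤ 1/2` for `t ≤ t*`, dividing by `u` and letting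
`u → 0` leaves `8 B t* ‖h‖`.
-/

section MultiIndex

variable {n : ℕ}

lemma pderiv'_pderiv'_comm {g : (Fin n → ℝ) → ℝ} (hg : ContDiff ℝ 2 g) (i j : Fin n) :
    pderiv' i (pderiv' j g) = pderiv' j (pderiv' i g) := by
  have hfd : Differentiable ℝ (fderiv ℝ g) :=
    (hg.fderiv_right le_rfl).differentiable one_ne_zero
  have key : ∀ a b : Fin n, pderiv' a (pderiv' b g)
      = fun x => fderiv ℝ (fderiv ℝ g) x (Pi.single a 1) (Pi.single b 1) := by
    intro a b
    funext x
    change fderiv ℝ (fun y => fderiv ℝ g y (Pi.single b 1)) x (Pi.single a 1) = _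
    rw [fderiv_clm_apply (hfd x) (differentiableAt_const _)]
    simp
  funext x
  simp only [key]
  exact hg.contDiffAt.isSymmSndFDerivAt (by simp) (Pi.single i 1) (Pi.single j 1)

lemma foldr_iterate_pderiv'_of_forall_eq_zero (β : Fin n → ℕ) {l : List (Fin n)}
    (hl : ∀ m ∈ l, β m = 0) (g : (Fin n → ℝ) → ℝ) :
    l.foldr (fun m h => (pderiv' m)^[β m] h) g = g := by
  induction l with
  | nil => rfl
  | cons a l ih =>
    simp only [List.foldr_cons, ih fun m hm => hl m (List.mem_cons_of_mem a hm),
      hl a List.mem_cons_self, Function.iterate_zero, id]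

lemma foldr_iterate_pderiv'_of_forall_ne_eq_zero (β : Fin n → ℕ) {l : List (Fin n)}
    (hl : l.Nodup) {i : Fin n} (hi : i ∈ l) (hβ : ∀ m ∈ l, m ≠ i → β m = 0)
    (g : (Fin n → ℝ) → ℝ) :
    l.foldr (fun m h => (pderiv' m)^[β m] h) g = (pderiv' i)^[β i] g := by
  obtain ⟨s, t, rfl⟩ := List.append_of_mem hi
  have hst : i ∉ s ++ t := (List.nodup_cons.1 (List.nodup_middle.1 hl)).1
  have hβ' : ∀ m ∈ s ++ t, β m = 0 := fun m hm =>
    hβ m (List.mem_append.2 ((List.mem_append.1 hm).imp id (List.mem_cons_of_mem _)))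
      (ne_of_mem_of_not_mem hm hst)
  rw [List.foldr_append, List.foldr_cons,
    foldr_iterate_pderiv'_of_forall_eq_zero β fun m hm => hβ' m (List.mem_append_right s hm),
    foldr_iterate_pderiv'_of_forall_eq_zero β fun m hm => hβ' m (List.mem_append_left t hm)]

lemma foldr_iterate_pderiv'_single_add_single {g : (Fin n → ℝ) → ℝ} (hg : ContDiff ℝ 2 g)
    {i j : Fin n} (hij : i ≠ j) {l : List (Fin n)} (hl : l.Nodup) (hi : i ∈ l) (hj : j ∈ l) :
    l.foldr (fun m h => (pderiv' m)^[(Pi.single i 1 + Pi.single j 1 : Fin n → ℕ) m] h) g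
      = pderiv' i (pderiv' j g) := by
  set β : Fin n → ℕ := Pi.single i 1 + Pi.single j 1
  have hβ : ∀ m, m ≠ i → m ≠ j → β m = 0 := fun m hmi hmj => by simp [β, hmi, hmj]
  have hβi : β i = 1 := by simp [β, hij]
  have hβj : β j = 1 := by simp [β, hij.symm]
  induction l with
  | nil => simp at hi
  | cons a l ih =>
    obtain ⟨ha, hl⟩ := List.nodup_cons.1 hl
    have hne : ∀ m ∈ l, m ≠ a := fun m hm => ne_of_mem_of_not_mem hm ha
    rw [List.foldr_cons]
    by_cases hai : a = i
    · subst hai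
      have hj : j ∈ l := (List.mem_cons.1 hj).resolve_left hij.symm
      rw [foldr_iterate_pderiv'_of_forall_ne_eq_zero β hl hj fun m hm => hβ m (hne m hm),
        hβi, hβj, Function.iterate_one, Function.iterate_one]
    by_cases haj : a = j
    · subst haj
      have hi : i ∈ l := (List.mem_cons.1 hi).resolve_left (Ne.symm hai)
      rw [foldr_iterate_pderiv'_of_forall_ne_eq_zero β hl hi fun m hm hmi => hβ m hmi (hne m hm),
        hβi, hβj, Function.iterate_one, Function.iterate_one, pderiv'_pderiv'_comm hg]
    · rw [hβ a hai haj, Function.iterate_zero, id,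
        ih hl ((List.mem_cons.1 hi).resolve_left (Ne.symm hai))
          ((List.mem_cons.1 hj).resolve_left (Ne.symm haj))]

lemma mderiv'_single (i : Fin n) (c : ℕ) (g : (Fin n → ℝ) → ℝ) :
    mderiv' (Pi.single i c) g = (pderiv' i)^[c] g := by
  rw [mderiv', foldr_iterate_pderiv'_of_forall_ne_eq_zero _ (List.nodup_finRange n)
    (List.mem_finRange i) fun m _ hm => by simp [hm], Pi.single_eq_same]

lemma mderiv'_single_add_single {g : (Fin n → ℝ) → ℝ} (hg : ContDiff ℝ 2 g) (i j : Fin n) :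
    mderiv' (Pi.single i 1 + Pi.single j 1) g = pderiv' i (pderiv' j g) := by
  rcases eq_or_ne i j with rfl | hij
  · rw [← Pi.single_add, mderiv'_single]
    rfl
  · exact foldr_iterate_pderiv'_single_add_single hg hij (List.nodup_finRange n)
      (List.mem_finRange i) (List.mem_finRange j)

end MultiIndex

open Finset in
lemma sum_sum_le_two_mul_sum_filter_le {ι : Type*} [Fintype ι] [LinearOrder ι] (F : ι → ι → ℝ)
    (hsymm : ∀ i j, F i j = F j i) (hnonneg : ∀ i j, 0 ≤ F i j) :
    ∑ i, ∑ j, F i j ≤ 2 * ∑ p ∈ univ.filter (fun p : ι × ι => p.1 ≤ p.2), F p.1 p.2 := by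
  set A : ι → ι → ℝ := fun i j => if i ≤ j then F i j else 0
  have hA0 : ∀ i j, 0 ≤ A i j := fun i j => by
    simp only [A]
    split_ifs
    exacts [hnonneg i j, le_rfl]
  have hA : ∀ i j, F i j ≤ A i j + A j i := by
    intro i j
    rcases le_total i j with h | h
    · simpa [A, h] using hA0 j i
    · simpa [A, h, hsymm i j] using hA0 i j
  calc ∑ i, ∑ j, F i j ≤ ∑ i, ∑ j, (A i j + A j i) :=
        sum_le_sum fun i _ => sum_le_sum fun j _ => hA i j
    _ = 2 * ∑ i, ∑ j, A i j := by
        simp only [sum_add_distrib]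
        rw [sum_comm (f := fun i j => A j i)]
        ring
    _ = 2 * ∑ p ∈ univ.filter (fun p : ι × ι => p.1 ≤ p.2), F p.1 p.2 := by
        rw [sum_filter, ← univ_product_univ, sum_product]

section DjNorm

open Finset

variable {n : ℕ}

lemma sSup_abs_image_nonneg (f : (Fin n → ℝ) → ℝ) (U : Set (Fin n → ℝ)) :
    0 ≤ sSup ((fun x => |f x|) '' U) :=
  Real.sSup_nonneg (by rintro _ ⟨x, -, rfl⟩; exact abs_nonneg _)

lemma DjNorm_nonneg (j : ℕ) (V : (Fin n → ℝ) → Fin n → ℝ) (U : Set (Fin n → ℝ)) :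
    0 ≤ DjNorm j V U :=
  sum_nonneg fun _ _ => sum_nonneg fun _ _ => sSup_abs_image_nonneg _ _

lemma sum_sSup_le_DjNorm (j : ℕ) (V : (Fin n → ℝ) → Fin n → ℝ) (U : Set (Fin n → ℝ))
    {T : Finset (Fin n → ℕ)} (hT : ∀ β ∈ T, ∑ i, β i = j) :
    ∑ β ∈ T, ∑ k, sSup ((fun x => |mderiv' β (fun z => V z k) x|) '' U) ≤ DjNorm j V U := by
  -- `DjNorm j` indexes multi-indices by `Fin n → Fin (j + 1)`; the entries of a multi-index of
  -- degree `j` are at most `j`, so nothing is lost in the conversion.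
  set G : (Fin n → Fin (j + 1)) → ℝ := fun γ =>
    ∑ k, sSup ((fun x => |mderiv' (fun i => (γ i : ℕ)) (fun z => V z k) x|) '' U)
  set toFin : (Fin n → ℕ) → Fin n → Fin (j + 1) := fun β i => Fin.ofNat (j + 1) (β i)
  have hval : ∀ β ∈ T, (fun i => (toFin β i : ℕ)) = β := fun β hβ => funext fun i =>
    (Fin.val_ofNat _ _).trans <| Nat.mod_eq_of_lt <| Nat.lt_succ_of_le <|
      hT β hβ ▸ single_le_sum (fun _ _ => Nat.zero_le _) (mem_univ i)
  calc ∑ β ∈ T, ∑ k, sSup ((fun x => |mderiv' β (fun z => V z k) x|) '' U)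
      = ∑ β ∈ T, G (toFin β) := sum_congr rfl fun β hβ => by simp only [G, hval β hβ]
    _ = ∑ γ ∈ T.image toFin, G γ := by
        refine (sum_image fun β hβ β' hβ' h => ?_).symm
        rw [← hval β hβ, ← hval β' hβ', h]
    _ ≤ DjNorm j V U := by
        refine sum_le_sum_of_subset_of_nonneg ?_
          fun γ _ _ => sum_nonneg fun _ _ => sSup_abs_image_nonneg _ _
        intro γ hγ
        obtain ⟨β, hβ, rfl⟩ := mem_image.1 hγ
        refine mem_filter.2 ⟨mem_univ _, ?_⟩
        exact (congrArg (fun f : Fin n → ℕ => ∑ i, f i) (hval β hβ)).trans (hT β hβ)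

lemma sum_sSup_pderiv'_le_DjNorm_one (V : (Fin n → ℝ) → Fin n → ℝ) (U : Set (Fin n → ℝ)) :
    ∑ i, ∑ k, sSup ((fun x => |pderiv' i (fun z => V z k) x|) '' U) ≤ DjNorm 1 V U := by
  have h := sum_sSup_le_DjNorm 1 V U (T := univ.image fun i => Pi.single i 1) (by simp)
  rw [sum_image fun a _ b _ hab => by simpa [Pi.single_apply] using congrFun hab a] at h
  simpa only [mderiv'_single, Function.iterate_one] using h

lemma single_add_single_injOn :
    Set.InjOn (fun p : Fin n × Fin n => (Pi.single p.1 1 + Pi.single p.2 1 : Fin n → ℕ))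
      {p | p.1 ≤ p.2} := by
  rintro ⟨i, j⟩ (hij : i ≤ j) ⟨i', j'⟩ (hij' : i' ≤ j') h
  rcases (Pi.single_add_single_eq_single_add_single one_ne_zero one_ne_zero).1 h with
    ⟨rfl, rfl⟩ | ⟨-, rfl, rfl⟩ | ⟨h2, -⟩
  · rfl
  · rw [le_antisymm hij hij']
  · exact absurd h2 (by norm_num)

lemma sum_sSup_pderiv'_pderiv'_le_DjNorm_two {V : (Fin n → ℝ) → Fin n → ℝ}
    (hV : ∀ k, ContDiff ℝ 2 (fun z => V z k)) (U : Set (Fin n → ℝ)) :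
    ∑ i, ∑ j, ∑ k, sSup ((fun x => |pderiv' i (pderiv' j (fun z => V z k)) x|) '' U)
      ≤ 2 * DjNorm 2 V U := by
  set P := univ.filter fun p : Fin n × Fin n => p.1 ≤ p.2
  calc ∑ i, ∑ j, ∑ k, sSup ((fun x => |pderiv' i (pderiv' j (fun z => V z k)) x|) '' U)
      ≤ 2 * ∑ p ∈ P, ∑ k,
          sSup ((fun x => |pderiv' p.1 (pderiv' p.2 (fun z => V z k)) x|) '' U) :=
        sum_sum_le_two_mul_sum_filter_le _
          (fun i j => by simp only [pderiv'_pderiv'_comm (hV _) i j])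
          fun i j => sum_nonneg fun _ _ => sSup_abs_image_nonneg _ _
    _ = 2 * ∑ β ∈ P.image fun p => Pi.single p.1 1 + Pi.single p.2 1, ∑ k,
          sSup ((fun x => |mderiv' β (fun z => V z k) x|) '' U) := by
        have hinj : Set.InjOn (fun p : Fin n × Fin n => (Pi.single p.1 1 + Pi.single p.2 1 :
            Fin n → ℕ)) P := fun p hp q hq =>
          single_add_single_injOn (mem_filter.1 hp).2 (mem_filter.1 hq).2
        rw [sum_image fun p hp q hq => hinj hp hq]
        simp only [mderiv'_single_add_single (hV _)]
    _ ≤ 2 * DjNorm 2 V U := by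
        gcongr
        refine sum_sSup_le_DjNorm 2 V U fun β hβ => ?_
        obtain ⟨p, -, rfl⟩ := mem_image.1 hβ
        simp [sum_add_distrib]

end DjNorm

section DerivativeBounds

open Finset

variable {n : ℕ}

lemma opNorm_le_sum_norm_apply_single {F : Type*} [NormedAddCommGroup F] [NormedSpace ℝ F]
    (A : (Fin n → ℝ) →L[ℝ] F) : ‖A‖ ≤ ∑ i, ‖A (Pi.single i 1)‖ := by
  refine A.opNorm_le_bound (sum_nonneg fun _ _ => norm_nonneg _) fun v => ?_
  conv_lhs => rw [← univ_sum_single v]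
  calc ‖A (∑ i, Pi.single i (v i))‖ = ‖∑ i, v i • A (Pi.single i 1)‖ := by
        simp only [map_sum, ← Pi.single_smul', ← map_smul, smul_eq_mul, mul_one]
    _ ≤ ∑ i, ‖v‖ * ‖A (Pi.single i 1)‖ := norm_sum_le_of_le _ fun i _ => by
        rw [norm_smul]
        exact mul_le_mul_of_nonneg_right (norm_le_pi_norm v i) (norm_nonneg _)
    _ = (∑ i, ‖A (Pi.single i 1)‖) * ‖v‖ := by
        rw [sum_mul]
        exact sum_congr rfl fun _ _ => mul_comm _ _

lemma opNorm_le_sum_norm_proj_comp {E : Type*} [NormedAddCommGroup E] [NormedSpace ℝ E]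
    (A : E →L[ℝ] Fin n → ℝ) : ‖A‖ ≤ ∑ k, ‖(ContinuousLinearMap.proj k).comp A‖ := by
  refine A.opNorm_le_bound (sum_nonneg fun _ _ => norm_nonneg _) fun v => ?_
  rw [sum_mul, pi_norm_le_iff_of_nonneg (by positivity)]
  intro k
  exact ((ContinuousLinearMap.proj k).comp A).le_opNorm v |>.trans <|
    single_le_sum (f := fun k => ‖(ContinuousLinearMap.proj k).comp A‖ * ‖v‖)
      (fun _ _ => by positivity) (mem_univ k)

lemma norm_fderiv_le_sum_sSup {f : (Fin n → ℝ) → ℝ} {U : Set (Fin n → ℝ)}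
    (hbdd : ∀ j, BddAbove ((fun x => |pderiv' j f x|) '' U)) {x : Fin n → ℝ} (hx : x ∈ U) :
    ‖fderiv ℝ f x‖ ≤ ∑ j, sSup ((fun x => |pderiv' j f x|) '' U) :=
  (opNorm_le_sum_norm_apply_single _).trans <|
    sum_le_sum fun j _ => le_csSup (hbdd j) (Set.mem_image_of_mem _ hx)

variable {V : (Fin n → ℝ) → Fin n → ℝ} {M : Set (Fin n → ℝ)}

lemma norm_fderiv_le_DjNorm_one (hV : Differentiable ℝ V)
    (hbdd : ∀ β : Fin n → ℕ, ∑ i, β i = 1 → ∀ k,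
      BddAbove ((fun x => |mderiv' β (fun z => V z k) x|) '' M))
    {x : Fin n → ℝ} (hx : x ∈ M) : ‖fderiv ℝ V x‖ ≤ DjNorm 1 V M := by
  have hbdd' : ∀ k j, BddAbove ((fun x => |pderiv' j (fun z => V z k) x|) '' M) := by
    intro k j
    simpa only [mderiv'_single, Function.iterate_one] using hbdd (Pi.single j 1) (by simp) k
  calc ‖fderiv ℝ V x‖ ≤ ∑ k, ‖fderiv ℝ (fun z => V z k) x‖ := by
        simpa only [fderiv_apply (hV x)] using opNorm_le_sum_norm_proj_comp (fderiv ℝ V x)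
    _ ≤ ∑ k, ∑ j, sSup ((fun x => |pderiv' j (fun z => V z k) x|) '' M) :=
        sum_le_sum fun k _ => norm_fderiv_le_sum_sSup (hbdd' k) hx
    _ ≤ DjNorm 1 V M := by
        rw [sum_comm]
        exact sum_sSup_pderiv'_le_DjNorm_one V M

lemma abs_pderiv'_sub_le (hM : Convex ℝ M) {f : (Fin n → ℝ) → ℝ} (hf : ContDiff ℝ 2 f)
    (hbdd : ∀ β : Fin n → ℕ, ∑ i, β i = 2 → BddAbove ((fun x => |mderiv' β f x|) '' M))
    (i : Fin n) {p q : Fin n → ℝ} (hp : p ∈ M) (hq : q ∈ M) :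
    |pderiv' i f p - pderiv' i f q|
      ≤ (∑ j, sSup ((fun x => |pderiv' j (pderiv' i f) x|) '' M)) * ‖p - q‖ := by
  have hdiff : Differentiable ℝ (pderiv' i f) :=
    ((hf.fderiv_right le_rfl).clm_apply contDiff_const).differentiable one_ne_zero
  have hbdd' : ∀ j, BddAbove ((fun x => |pderiv' j (pderiv' i f) x|) '' M) := fun j => by
    have h := hbdd (Pi.single j 1 + Pi.single i 1) (by simp [sum_add_distrib])
    rwa [mderiv'_single_add_single hf] at h
  exact hM.norm_image_sub_le_of_norm_fderiv_le (fun x _ => hdiff x)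
    (fun x hx => norm_fderiv_le_sum_sSup hbdd' hx) hq hp

lemma norm_fderiv_sub_le_two_mul_DjNorm_two (hM : Convex ℝ M) (hV : ContDiff ℝ 2 V)
    (hbdd : ∀ β : Fin n → ℕ, ∑ i, β i = 2 → ∀ k,
      BddAbove ((fun x => |mderiv' β (fun z => V z k) x|) '' M))
    {p q : Fin n → ℝ} (hp : p ∈ M) (hq : q ∈ M) :
    ‖fderiv ℝ V p - fderiv ℝ V q‖ ≤ 2 * DjNorm 2 V M * ‖p - q‖ := by
  have hVk : ∀ k, ContDiff ℝ 2 (fun z => V z k) := contDiff_pi.1 hV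
  have hdiff : Differentiable ℝ V := hV.differentiable two_ne_zero
  calc ‖fderiv ℝ V p - fderiv ℝ V q‖
      ≤ ∑ k, ‖fderiv ℝ (fun z => V z k) p - fderiv ℝ (fun z => V z k) q‖ := by
        simpa only [ContinuousLinearMap.comp_sub, fderiv_apply (hdiff _)] using
          opNorm_le_sum_norm_proj_comp (fderiv ℝ V p - fderiv ℝ V q)
    _ ≤ ∑ k, ∑ i, |pderiv' i (fun z => V z k) p - pderiv' i (fun z => V z k) q| :=
        sum_le_sum fun k _ => (opNorm_le_sum_norm_apply_single _).trans_eq rfl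
    _ ≤ ∑ k, ∑ i, (∑ j, sSup ((fun x => |pderiv' j (pderiv' i (fun z => V z k)) x|) '' M))
          * ‖p - q‖ :=
        sum_le_sum fun k _ => sum_le_sum fun i _ =>
          abs_pderiv'_sub_le hM (hVk k) (fun β hβ => hbdd β hβ k) i hp hq
    _ = (∑ j, ∑ i, ∑ k, sSup ((fun x => |pderiv' j (pderiv' i (fun z => V z k)) x|) '' M))
          * ‖p - q‖ := by
        simp only [sum_mul]
        conv_lhs => enter [2, k]; rw [sum_comm]
        rw [sum_comm]
        conv_lhs => enter [2, j]; rw [sum_comm]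
    _ ≤ 2 * DjNorm 2 V M * ‖p - q‖ := by
        gcongr
        exact sum_sSup_pderiv'_pderiv'_le_DjNorm_two hVk M

end DerivativeBounds

section SecondDifference

variable {E F : Type*} [NormedAddCommGroup E] [NormedSpace ℝ E] [NormedAddCommGroup F]
  [NormedSpace ℝ F]

lemma norm_add_smul_sub_sub_add_smul_sub_le {a b a' b' : E} {δ θ : ℝ} (hab : ‖a - b‖ ≤ δ)
    (ha'b' : ‖a' - b'‖ ≤ δ) (hθ : θ ∈ Icc (0:ℝ) 1) :
    ‖(a + θ • (a' - a)) - (b + θ • (b' - b))‖ ≤ δ := by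
  have := (convex_closedBall (0 : E) δ).add_smul_sub_mem (mem_closedBall_zero_iff.2 hab)
    (mem_closedBall_zero_iff.2 ha'b') hθ
  rwa [mem_closedBall_zero_iff, show a - b + θ • (a' - b' - (a - b))
    = (a + θ • (a' - a)) - (b + θ • (b' - b)) by module] at this

lemma norm_sub_sub_sub_le_of_fderiv {g : E → F} {M : Set E} (hM : Convex ℝ M)
    (hg : ∀ x ∈ M, DifferentiableAt ℝ g x) {L B : ℝ} (hDg : ∀ x ∈ M, ‖fderiv ℝ g x‖ ≤ L)
    (hD2g : ∀ p ∈ M, ∀ q ∈ M, ‖fderiv ℝ g p - fderiv ℝ g q‖ ≤ B * ‖p - q‖) (hB : 0 ≤ B)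
    {a b a' b' : E} (ha : a ∈ M) (hb : b ∈ M) (ha' : a' ∈ M) (hb' : b' ∈ M) {δ : ℝ}
    (hab : ‖a - b‖ ≤ δ) (ha'b' : ‖a' - b'‖ ≤ δ) :
    ‖(g a' - g a) - (g b' - g b)‖ ≤ B * δ * ‖a' - a‖ + L * ‖(a' - a) - (b' - b)‖ := by
  set p : ℝ → E := fun θ => a + θ • (a' - a)
  set q : ℝ → E := fun θ => b + θ • (b' - b)
  have hpM : ∀ θ ∈ Icc (0:ℝ) 1, p θ ∈ M := fun θ hθ => hM.add_smul_sub_mem ha ha' hθ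
  have hqM : ∀ θ ∈ Icc (0:ℝ) 1, q θ ∈ M := fun θ hθ => hM.add_smul_sub_mem hb hb' hθ
  have hderiv : ∀ θ ∈ Icc (0:ℝ) 1, HasDerivWithinAt (fun θ => g (p θ) - g (q θ))
      (fderiv ℝ g (p θ) (a' - a) - fderiv ℝ g (q θ) (b' - b)) (Icc 0 1) θ := by
    intro θ hθ
    have hline : ∀ (c v : E), HasDerivAt (fun θ : ℝ => c + θ • v) v θ := fun c v => by
      simpa using ((hasDerivAt_id θ).smul_const v).const_add c
    exact (((hg _ (hpM θ hθ)).hasFDerivAt.comp_hasDerivAt θ (hline a (a' - a))).sub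
      ((hg _ (hqM θ hθ)).hasFDerivAt.comp_hasDerivAt θ (hline b (b' - b)))).hasDerivWithinAt
  have hbound : ∀ θ ∈ Ico (0:ℝ) 1,
      ‖fderiv ℝ g (p θ) (a' - a) - fderiv ℝ g (q θ) (b' - b)‖
        ≤ B * δ * ‖a' - a‖ + L * ‖(a' - a) - (b' - b)‖ := by
    intro θ hθ
    have hθ' := Ico_subset_Icc_self hθ
    rw [show fderiv ℝ g (p θ) (a' - a) - fderiv ℝ g (q θ) (b' - b)
        = (fderiv ℝ g (p θ) - fderiv ℝ g (q θ)) (a' - a)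
          + fderiv ℝ g (q θ) ((a' - a) - (b' - b)) by simp]
    refine (norm_add_le _ _).trans (add_le_add ?_ ?_)
    · calc ‖(fderiv ℝ g (p θ) - fderiv ℝ g (q θ)) (a' - a)‖
          ≤ B * ‖p θ - q θ‖ * ‖a' - a‖ :=
            (ContinuousLinearMap.le_opNorm _ _).trans <| mul_le_mul_of_nonneg_right
              (hD2g _ (hpM θ hθ') _ (hqM θ hθ')) (norm_nonneg _)
        _ ≤ B * δ * ‖a' - a‖ := by
            gcongr
            exact norm_add_smul_sub_sub_add_smul_sub_le hab ha'b' hθ'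
    · exact (ContinuousLinearMap.le_opNorm _ _).trans <| mul_le_mul_of_nonneg_right
        (hDg _ (hqM θ hθ')) (norm_nonneg _)
  have h := norm_image_sub_le_of_norm_deriv_le_segment_01' hderiv hbound
  simp only [p, q, zero_smul, add_zero, one_smul, add_sub_cancel] at h
  rwa [sub_sub_sub_comm]

end SecondDifference

lemma norm_mul_one_sub_le_of_eq_add_integral {E : Type*} [NormedAddCommGroup E]
    [NormedSpace ℝ E] {φ g : ℝ → E} {f : ℝ → ℝ} {a : E} {t A L : ℝ} (ht : 0 ≤ t) (hL : 0 ≤ L)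
    (hLt : L * t ≤ 1) (hg : IntervalIntegrable g volume 0 t)
    (hf : IntervalIntegrable f volume 0 t) (hφ : ∀ r ∈ Icc 0 t, φ r = a + ∫ s in (0:ℝ)..r, g s)
    (hgf : ∀ s ∈ Icc 0 t, ‖g s‖ ≤ f s + L * ‖φ s‖)
    (hA : ∀ r ∈ Icc 0 t, ‖a‖ + ∫ s in (0:ℝ)..r, f s ≤ A) :
    ‖φ t‖ * (1 - L * t) ≤ A := by
  have hcont : ContinuousOn φ (Icc 0 t) := by
    have := continuousOn_const.add (f := fun _ => a)
      (intervalIntegral.continuousOn_primitive_interval' hg left_mem_uIcc)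
    rw [uIcc_of_le ht] at this
    exact this.congr hφ
  obtain ⟨r₀, hr₀, hmax⟩ := isCompact_Icc.exists_isMaxOn (nonempty_Icc.2 ht) hcont.norm
  set m := ‖φ r₀‖
  have hm0 : 0 ≤ m := norm_nonneg _
  have hr₀' : m ≤ ‖a‖ + (∫ s in (0:ℝ)..r₀, f s) + L * t * m := by
    have hf₀ : IntervalIntegrable f volume 0 r₀ := hf.mono_set (by
      rw [uIcc_of_le hr₀.1, uIcc_of_le ht]
      exact Icc_subset_Icc le_rfl hr₀.2)
    calc m ≤ ‖a‖ + ‖∫ s in (0:ℝ)..r₀, g s‖ := by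
          rw [show m = ‖φ r₀‖ from rfl, hφ r₀ hr₀]
          exact norm_add_le _ _
      _ ≤ ‖a‖ + ∫ s in (0:ℝ)..r₀, (f s + L * m) := by
          gcongr
          refine intervalIntegral.norm_integral_le_of_norm_le hr₀.1
            (Eventually.of_forall fun s hs => ?_) (hf₀.add intervalIntegrable_const)
          have hs' : s ∈ Icc 0 t := ⟨hs.1.le, hs.2.trans hr₀.2⟩
          exact (hgf s hs').trans (by gcongr; exact hmax hs')
      _ = ‖a‖ + (∫ s in (0:ℝ)..r₀, f s) + L * m * r₀ := by
          rw [intervalIntegral.integral_add hf₀ intervalIntegrable_const,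
            intervalIntegral.integral_const, smul_eq_mul, sub_zero]
          ring
      _ ≤ ‖a‖ + (∫ s in (0:ℝ)..r₀, f s) + L * t * m := by
          nlinarith [hr₀.2, mul_nonneg hL hm0]
  have ht' : ‖φ t‖ ≤ m := hmax (right_mem_Icc.2 ht)
  nlinarith [hA r₀ hr₀]

lemma intervalIntegrable_inv_one_sub_mul_sq {L r : ℝ} (hL : 0 ≤ L) (hr : 0 ≤ r)
    (hLr : L * r < 1) :
    IntervalIntegrable (fun τ => ((1 - L * τ) ^ 2)⁻¹) volume 0 r := by
  refine (ContinuousOn.inv₀ (by fun_prop) fun τ hτ => ?_).intervalIntegrable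
  rw [uIcc_of_le hr] at hτ
  have : 0 < 1 - L * τ := by nlinarith [hτ.2]
  positivity

lemma integral_inv_one_sub_mul_sq {L r : ℝ} (hL : 0 ≤ L) (hr : 0 ≤ r) (hLr : L * r < 1) :
    ∫ τ in (0:ℝ)..r, ((1 - L * τ) ^ 2)⁻¹ = r / (1 - L * r) := by
  have hderiv : ∀ τ ∈ uIcc 0 r,
      HasDerivAt (fun τ => τ / (1 - L * τ)) ((1 - L * τ) ^ 2)⁻¹ τ := by
    intro τ hτ
    rw [uIcc_of_le hr] at hτ
    have hpos : 0 < 1 - L * τ := by nlinarith [hτ.2]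
    refine ((hasDerivAt_id' τ).div (((hasDerivAt_id' τ).const_mul L).const_sub 1)
      hpos.ne').congr_deriv ?_
    field_simp
    ring
  rw [intervalIntegral.integral_eq_sub_of_hasDerivAt hderiv
    (intervalIntegrable_inv_one_sub_mul_sq hL hr hLr)]
  simp

section Flow

variable {E : Type*} [NormedAddCommGroup E] [NormedSpace ℝ E]

structure IsIntegralFlow (V : E → E) (X : ℝ → E) (Y : E → ℝ → E) (S M : Set E) (t₀ : ℝ) :
    Prop where
  intervalIntegrable : ∀ x ∈ S, ∀ t ∈ Icc 0 t₀,
    IntervalIntegrable (fun s => V (Y x s)) volume 0 t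
  eq_add_integral : ∀ x ∈ S, ∀ t ∈ Icc 0 t₀, Y x t = x + X t + ∫ s in (0:ℝ)..t, V (Y x s)
  mapsTo : ∀ x ∈ S, ∀ t ∈ Icc 0 t₀, Y x t ∈ M

variable {V : E → E} {X : ℝ → E} {Y : E → ℝ → E} {S M : Set E} {t₀ : ℝ}

namespace IsIntegralFlow

lemma sub_eq (hY : IsIntegralFlow V X Y S M t₀) {z z' : E} (hz : z ∈ S) (hz' : z' ∈ S)
    {t : ℝ} (ht : t ∈ Icc 0 t₀) :
    Y z' t - Y z t = (z' - z) + ∫ s in (0:ℝ)..t, (V (Y z' s) - V (Y z s)) := by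
  rw [hY.eq_add_integral z' hz' t ht, hY.eq_add_integral z hz t ht,
    intervalIntegral.integral_sub (hY.intervalIntegrable z' hz' t ht)
      (hY.intervalIntegrable z hz t ht)]
  abel

lemma norm_sub_mul_le (hY : IsIntegralFlow V X Y S M t₀) {L : ℝ} (hL : 0 ≤ L)
    (hV : ∀ p ∈ M, ∀ q ∈ M, ‖V p - V q‖ ≤ L * ‖p - q‖) {z z' : E} (hz : z ∈ S) (hz' : z' ∈ S)
    {t : ℝ} (ht : t ∈ Icc 0 t₀) (hLt : L * t ≤ 1) :
    ‖Y z' t - Y z t‖ * (1 - L * t) ≤ ‖z' - z‖ := by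
  have hsub : Icc 0 t ⊆ Icc 0 t₀ := Icc_subset_Icc le_rfl ht.2
  refine norm_mul_one_sub_le_of_eq_add_integral (f := fun _ => 0) ht.1 hL hLt
    ((hY.intervalIntegrable z' hz' t ht).sub (hY.intervalIntegrable z hz t ht))
    intervalIntegrable_const (fun r hr => hY.sub_eq hz hz' (hsub hr)) (fun s hs => ?_)
    (fun r _ => by simp)
  rw [zero_add]
  exact hV _ (hY.mapsTo z' hz' s (hsub hs)) _ (hY.mapsTo z hz s (hsub hs))

lemma norm_sub_le_div (hY : IsIntegralFlow V X Y S M t₀) {L : ℝ} (hL : 0 ≤ L)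
    (hV : ∀ p ∈ M, ∀ q ∈ M, ‖V p - V q‖ ≤ L * ‖p - q‖) {z z' : E} (hz : z ∈ S) (hz' : z' ∈ S)
    {t : ℝ} (ht : t ∈ Icc 0 t₀) (hLt : L * t < 1) :
    ‖Y z' t - Y z t‖ ≤ ‖z' - z‖ / (1 - L * t) :=
  (le_div_iff₀ (by linarith)).2 (hY.norm_sub_mul_le hL hV hz hz' ht hLt.le)

variable {L B : ℝ} {z w d : E}

lemma norm_integrand_second_difference_le (hY : IsIntegralFlow V X Y S M t₀)
    (hM : Convex ℝ M) (hV : ∀ x ∈ M, DifferentiableAt ℝ V x) (hL : 0 ≤ L) (hB : 0 ≤ B)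
    (hDV : ∀ x ∈ M, ‖fderiv ℝ V x‖ ≤ L)
    (hD2V : ∀ p ∈ M, ∀ q ∈ M, ‖fderiv ℝ V p - fderiv ℝ V q‖ ≤ B * ‖p - q‖)
    (h₁ : z ∈ S) (h₂ : z + d ∈ S) (h₃ : z + w ∈ S) (h₄ : z + w + d ∈ S)
    {r : ℝ} (hr : r ∈ Icc 0 t₀) (hLr : L * r < 1) :
    ‖(V (Y (z + w + d) r) - V (Y (z + w) r)) - (V (Y (z + d) r) - V (Y z r))‖
      ≤ B * ‖w‖ * ‖d‖ * ((1 - L * r) ^ 2)⁻¹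
        + L * ‖(Y (z + w + d) r - Y (z + w) r) - (Y (z + d) r - Y z r)‖ := by
  have hLip : ∀ p ∈ M, ∀ q ∈ M, ‖V p - V q‖ ≤ L * ‖p - q‖ := fun p hp q hq =>
    hM.norm_image_sub_le_of_norm_fderiv_le hV hDV hq hp
  have hw : ‖Y (z + w) r - Y z r‖ ≤ ‖w‖ / (1 - L * r) := by
    simpa using hY.norm_sub_le_div hL hLip h₁ h₃ hr hLr
  have hw' : ‖Y (z + w + d) r - Y (z + d) r‖ ≤ ‖w‖ / (1 - L * r) := by
    simpa [add_sub_add_right_eq_sub] using hY.norm_sub_le_div hL hLip h₂ h₄ hr hLr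
  have hd : ‖Y (z + w + d) r - Y (z + w) r‖ ≤ ‖d‖ / (1 - L * r) := by
    simpa using hY.norm_sub_le_div hL hLip h₃ h₄ hr hLr
  have hM' := fun {x} (hx : x ∈ S) => hY.mapsTo x hx r hr
  calc _ ≤ B * (‖w‖ / (1 - L * r)) * ‖Y (z + w + d) r - Y (z + w) r‖
          + L * ‖(Y (z + w + d) r - Y (z + w) r) - (Y (z + d) r - Y z r)‖ :=
        norm_sub_sub_sub_le_of_fderiv hM hV hDV hD2V hB (hM' h₃) (hM' h₁) (hM' h₄) (hM' h₂) hw hw'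
    _ ≤ B * (‖w‖ / (1 - L * r)) * (‖d‖ / (1 - L * r))
          + L * ‖(Y (z + w + d) r - Y (z + w) r) - (Y (z + d) r - Y z r)‖ := by
        gcongr
    _ = _ := by rw [← inv_pow]; ring

lemma norm_second_difference_mul_sq_le (hY : IsIntegralFlow V X Y S M t₀)
    (hM : Convex ℝ M) (hV : ∀ x ∈ M, DifferentiableAt ℝ V x) (hL : 0 ≤ L) (hB : 0 ≤ B)
    (hDV : ∀ x ∈ M, ‖fderiv ℝ V x‖ ≤ L)
    (hD2V : ∀ p ∈ M, ∀ q ∈ M, ‖fderiv ℝ V p - fderiv ℝ V q‖ ≤ B * ‖p - q‖)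
    (h₁ : z ∈ S) (h₂ : z + d ∈ S) (h₃ : z + w ∈ S) (h₄ : z + w + d ∈ S)
    {t : ℝ} (ht : t ∈ Icc 0 t₀) (hLt : L * t < 1) :
    ‖(Y (z + w + d) t - Y (z + w) t) - (Y (z + d) t - Y z t)‖ * (1 - L * t) ^ 2
      ≤ B * ‖w‖ * ‖d‖ * t := by
  set W : ℝ → E := fun r => (Y (z + w + d) r - Y (z + w) r) - (Y (z + d) r - Y z r)
  set G : ℝ → E := fun s => (V (Y (z + w + d) s) - V (Y (z + w) s)) - (V (Y (z + d) s) - V (Y z s))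
  set c := B * ‖w‖ * ‖d‖
  have hsub : Icc 0 t ⊆ Icc 0 t₀ := Icc_subset_Icc le_rfl ht.2
  have hint := hY.intervalIntegrable
  have hW : ∀ r ∈ Icc 0 t₀, W r = ∫ s in (0:ℝ)..r, G s := by
    intro r hr
    simp only [W, G]
    rw [hY.sub_eq h₃ h₄ hr, hY.sub_eq h₁ h₂ hr, intervalIntegral.integral_sub
      ((hint _ h₄ r hr).sub (hint _ h₃ r hr)) ((hint _ h₂ r hr).sub (hint _ h₁ r hr))]
    abel
  have hε : 0 < 1 - L * t := by linarith
  have hc : 0 ≤ c := by positivity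
  have key : ‖W t‖ * (1 - L * t) ≤ c * (t / (1 - L * t)) := by
    refine norm_mul_one_sub_le_of_eq_add_integral (a := 0)
      (f := fun s => c * ((1 - L * s) ^ 2)⁻¹) ht.1 hL hLt.le
      (((hint _ h₄ t ht).sub (hint _ h₃ t ht)).sub ((hint _ h₂ t ht).sub (hint _ h₁ t ht)))
      ((intervalIntegrable_inv_one_sub_mul_sq hL ht.1 hLt).const_mul c)
      (fun r hr => (hW r (hsub hr)).trans (zero_add _).symm) (fun s hs => ?_) (fun r hr => ?_)
    · exact hY.norm_integrand_second_difference_le hM hV hL hB hDV hD2V h₁ h₂ h₃ h₄ (hsub hs)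
        (lt_of_le_of_lt (mul_le_mul_of_nonneg_left hs.2 hL) hLt)
    · have hLr : L * r < 1 := lt_of_le_of_lt (mul_le_mul_of_nonneg_left hr.2 hL) hLt
      rw [norm_zero, zero_add, intervalIntegral.integral_const_mul,
        integral_inv_one_sub_mul_sq hL hr.1 hLr]
      exact mul_le_mul_of_nonneg_left (div_le_div₀ ht.1 hr.2 hε (by nlinarith [hr.2])) hc
  calc ‖W t‖ * (1 - L * t) ^ 2 = ‖W t‖ * (1 - L * t) * (1 - L * t) := by ring
    _ ≤ c * (t / (1 - L * t)) * (1 - L * t) := mul_le_mul_of_nonneg_right key hε.le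
    _ = c * t := by rw [mul_assoc, div_mul_cancel₀ t hε.ne']

end IsIntegralFlow

end Flow

lemma IsIntegralFlow.norm_second_difference_le {n : ℕ} {V : (Fin n → ℝ) → Fin n → ℝ}
    {X : ℝ → Fin n → ℝ} {Y : (Fin n → ℝ) → ℝ → Fin n → ℝ} {S M : Set (Fin n → ℝ)} {t₀ : ℝ}
    (hY : IsIntegralFlow V X Y S M t₀) (hM : Convex ℝ M) (hV : ContDiff ℝ 2 V)
    (hbdd₁ : ∀ β : Fin n → ℕ, ∑ i, β i = 1 → ∀ k,
      BddAbove ((fun x => |mderiv' β (fun z => V z k) x|) '' M))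
    (hbdd₂ : ∀ β : Fin n → ℕ, ∑ i, β i = 2 → ∀ k,
      BddAbove ((fun x => |mderiv' β (fun z => V z k) x|) '' M))
    {z w d : Fin n → ℝ} (h₁ : z ∈ S) (h₂ : z + d ∈ S) (h₃ : z + w ∈ S) (h₄ : z + w + d ∈ S)
    {t : ℝ} (ht : t ∈ Icc 0 t₀) (hLt : DjNorm 1 V M * t ≤ 1 / 2) :
    ‖(Y (z + w + d) t - Y (z + w) t) - (Y (z + d) t - Y z t)‖
      ≤ 8 * DjNorm 2 V M * ‖w‖ * ‖d‖ * t := by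
  have hdiff : Differentiable ℝ V := hV.differentiable two_ne_zero
  have hW := hY.norm_second_difference_mul_sq_le hM (fun x _ => hdiff x) (DjNorm_nonneg 1 V M)
    (mul_nonneg zero_le_two (DjNorm_nonneg 2 V M))
    (fun x hx => norm_fderiv_le_DjNorm_one hdiff hbdd₁ hx)
    (fun p hp q hq => norm_fderiv_sub_le_two_mul_DjNorm_two hM hV hbdd₂ hp hq)
    h₁ h₂ h₃ h₄ ht (by linarith)
  have hquarter : 1 / 4 ≤ (1 - DjNorm 1 V M * t) ^ 2 := by nlinarith
  nlinarith [mul_le_mul_of_nonneg_left hquarter (norm_nonneg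
    ((Y (z + w + d) t - Y (z + w) t) - (Y (z + d) t - Y z t)))]

lemma tstar_le {n : ℕ} (V : (Fin n → ℝ) → Fin n → ℝ) (M : Set (Fin n → ℝ)) (t₀ : ℝ) :
    tstar V M t₀ ≤ t₀ := by
  unfold tstar
  split_ifs
  exacts [le_rfl, min_le_right _ _]

lemma DjNorm_one_mul_tstar_le {n : ℕ} (V : (Fin n → ℝ) → Fin n → ℝ) (M : Set (Fin n → ℝ))
    (t₀ : ℝ) : DjNorm 1 V M * tstar V M t₀ ≤ 1 / 2 := by
  unfold tstar
  split_ifs with h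
  · rw [h]
    norm_num
  · have hpos : 0 < DjNorm 1 V M := (DjNorm_nonneg 1 V M).lt_of_ne' h
    calc DjNorm 1 V M * min (1 / (2 * DjNorm 1 V M)) t₀
        ≤ DjNorm 1 V M * (1 / (2 * DjNorm 1 V M)) := by gcongr; exact min_le_left _ _
      _ = 1 / 2 := by field_simp

lemma add_mem_biUnion_ball {E : Type*} [SeminormedAddCommGroup E] {K : Set E} {x v : E}
    {r s R : ℝ} (hx : x ∈ ⋃ y ∈ K, Metric.ball y r) (hv : ‖v‖ < s) (hR : r + s ≤ R) :
    x + v ∈ ⋃ y ∈ K, Metric.ball y R := by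
  simp only [mem_iUnion, Metric.mem_ball] at hx ⊢
  obtain ⟨y, hy, hxy⟩ := hx
  refine ⟨y, hy, ?_⟩
  calc dist (x + v) y ≤ dist (x + v) x + dist x y := dist_triangle _ _ _
    _ < R := by rw [dist_eq_norm, add_sub_cancel_left]; linarith

theorem stmt6_general {n : ℕ} (t₀ : ℝ)
    (K M : Set (Fin n → ℝ)) (hMconv : Convex ℝ M)
    (V : (Fin n → ℝ) → Fin n → ℝ) (hV : ContDiff ℝ 3 V)
    (hVbdd : ∀ j : ℕ, j ≤ 3 → ∀ β : Fin n → ℕ, (∑ i, β i) = j → ∀ k : Fin n,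
      BddAbove ((fun x => |mderiv' β (fun z => V z k) x|) '' M))
    (X : ℝ → Fin n → ℝ)
    (Y : (Fin n → ℝ) → ℝ → Fin n → ℝ)
    (hYint : ∀ x ∈ ⋃ y ∈ K, Metric.ball y (3:ℝ), ∀ t ∈ Set.Icc (0:ℝ) t₀,
      IntervalIntegrable (fun s => V (Y x s)) volume 0 t)
    (hY : ∀ x ∈ ⋃ y ∈ K, Metric.ball y (3:ℝ), ∀ t ∈ Set.Icc (0:ℝ) t₀,
      Y x t = x + X t + ∫ s in (0:ℝ)..t, V (Y x s))
    (hYM : ∀ x ∈ ⋃ y ∈ K, Metric.ball y (3:ℝ), ∀ t ∈ Set.Icc (0:ℝ) t₀, Y x t ∈ M)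
    (DY : (Fin n → ℝ) → ℝ → Fin n → Fin n → ℝ)
    (hDY : ∀ t ∈ Set.Ioc (0:ℝ) (tstar V M t₀), ∀ x ∈ ⋃ y ∈ K, Metric.ball y (2:ℝ),
      ∀ i : Fin n,
        Filter.Tendsto (fun u : ℝ => u⁻¹ • (Y (x + u • (Pi.single i 1 : Fin n → ℝ)) t - Y x t))
          (𝓝[≠] (0:ℝ)) (𝓝 (DY x t i))) :
    ∀ t ∈ Set.Ioc (0:ℝ) (tstar V M t₀), ∀ x ∈ ⋃ y ∈ K, Metric.ball y (1:ℝ),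
      ∀ h : Fin n → ℝ, ‖h‖ < 1 → ∀ i : Fin n,
        ‖DY (x + h) t i - DY x t i‖ ≤ 8 * DjNorm 2 V M * tstar V M t₀ * ‖h‖ := by
  intro t ht x hx h hh i
  set e : Fin n → ℝ := Pi.single i 1
  have hK₂ : ∀ v, ‖v‖ < 1 → x + v ∈ ⋃ y ∈ K, Metric.ball y (2:ℝ) := fun v hv =>
    add_mem_biUnion_ball hx hv (by norm_num)
  have hK₃ : ∀ v, ‖v‖ < 2 → x + v ∈ ⋃ y ∈ K, Metric.ball y (3:ℝ) := fun v hv =>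
    add_mem_biUnion_ball hx hv (by norm_num)
  have hLt : DjNorm 1 V M * t ≤ 1 / 2 :=
    (mul_le_mul_of_nonneg_left ht.2 (DjNorm_nonneg 1 V M)).trans (DjNorm_one_mul_tstar_le V M t₀)
  have hquot : ∀ u : ℝ, ‖u‖ < 1 → u ≠ 0 →
      ‖u⁻¹ • (Y (x + h + u • e) t - Y (x + h) t) - u⁻¹ • (Y (x + u • e) t - Y x t)‖
        ≤ 8 * DjNorm 2 V M * tstar V M t₀ * ‖h‖ := by
    intro u hu hu0
    have hue : ‖u • e‖ = ‖u‖ := by simp [e, norm_smul, Pi.norm_single]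
    have hW := IsIntegralFlow.norm_second_difference_le ⟨hYint, hY, hYM⟩ hMconv
      (hV.of_le (by norm_num)) (hVbdd 1 (by norm_num)) (hVbdd 2 (by norm_num))
      (by simpa using hK₃ 0 (by simp)) (hK₃ _ (by linarith)) (hK₃ h (by linarith))
      (by rw [add_assoc]; exact hK₃ _ ((norm_add_le h (u • e)).trans_lt (by linarith)))
      ⟨ht.1.le, ht.2.trans (tstar_le V M t₀)⟩ hLt
    rw [hue] at hW
    rw [← smul_sub, norm_smul, norm_inv, inv_mul_le_iff₀ (norm_pos_iff.2 hu0)]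
    have hB : 0 ≤ 8 * DjNorm 2 V M * ‖h‖ * ‖u‖ := by
      have := DjNorm_nonneg 2 V M
      positivity
    nlinarith [mul_le_mul_of_nonneg_left ht.2 hB]
  refine le_of_tendsto ((hDY t ht (x + h) (hK₂ h hh) i).sub
    (hDY t ht x (by simpa using hK₂ 0 (by simp)) i)).norm ?_
  filter_upwards [eventually_nhdsWithin_of_eventually_nhds (Metric.ball_mem_nhds (0:ℝ) one_pos),
    self_mem_nhdsWithin] with u hu hu0
  exact hquot u (mem_ball_zero_iff.1 hu) hu0

/-- In the flow setup, for all `t ∈ (0, t*]`, `x ∈ K₁`, `‖h‖ < 1` and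
`i ∈ {1,…,n}`, `‖D_i Y^{x+h}(t) − D_i Y^{x}(t)‖ ≤ 8·‖D^{(2)}V‖_{∞,M}·t*·‖h‖`, where
`D_iY^x(t)` is the limit of the difference quotients (which exists on `K₂`). -/
theorem stmt6 {n : ℕ} (hn : 1 ≤ n) (t₀ : ℝ) (ht₀ : 0 < t₀)
    (K M : Set (Fin n → ℝ)) (hMconv : Convex ℝ M)
    (V : (Fin n → ℝ) → Fin n → ℝ) (hV : ContDiff ℝ 3 V)
    (hVbdd : ∀ j : ℕ, j ≤ 3 → ∀ β : Fin n → ℕ, (∑ i, β i) = j → ∀ k : Fin n,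
      BddAbove ((fun x => |mderiv' β (fun z => V z k) x|) '' M))
    (X : ℝ → Fin n → ℝ) (hX0 : X 0 = 0)
    (Y : (Fin n → ℝ) → ℝ → Fin n → ℝ)
    (hYint : ∀ x ∈ ⋃ y ∈ K, Metric.ball y (3:ℝ), ∀ t ∈ Set.Icc (0:ℝ) t₀,
      IntervalIntegrable (fun s => V (Y x s)) volume 0 t)
    (hY : ∀ x ∈ ⋃ y ∈ K, Metric.ball y (3:ℝ), ∀ t ∈ Set.Icc (0:ℝ) t₀,
      Y x t = x + X t + ∫ s in (0:ℝ)..t, V (Y x s))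
    (hYM : ∀ x ∈ ⋃ y ∈ K, Metric.ball y (3:ℝ), ∀ t ∈ Set.Icc (0:ℝ) t₀, Y x t ∈ M)
    (DY : (Fin n → ℝ) → ℝ → Fin n → Fin n → ℝ)
    (hDY : ∀ t ∈ Set.Ioc (0:ℝ) (tstar V M t₀), ∀ x ∈ ⋃ y ∈ K, Metric.ball y (2:ℝ),
      ∀ i : Fin n,
        Filter.Tendsto (fun u : ℝ => u⁻¹ • (Y (x + u • (Pi.single i 1 : Fin n → ℝ)) t - Y x t))
          (𝓝[≠] (0:ℝ)) (𝓝 (DY x t i))) :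
    ∀ t ∈ Set.Ioc (0:ℝ) (tstar V M t₀), ∀ x ∈ ⋃ y ∈ K, Metric.ball y (1:ℝ),
      ∀ h : Fin n → ℝ, ‖h‖ < 1 → ∀ i : Fin n,
        ‖DY (x + h) t i - DY x t i‖ ≤ 8 * DjNorm 2 V M * tstar V M t₀ * ‖h‖ :=
  stmt6_general t₀ K M hMconv V hV hVbdd X Y hYint hY hYM DY hDY
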